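/- Let s, t, α be positive integers with 2 ≤ α, α < s and α < t, and let G be a finite abelian group with line set 𝓛 making (G,𝓛) a proper partial geometry pg(s,t,α) admitting G as an abelian Singer group, such that the pair is of rigid type (axioms (i)–(vi) of the encoding). Then s < (α+1)² − 1. -/

import Mathlib

/-!
The collinearity graph of a partial geometry `pg(s,t,α)` is strongly regular. With `A` its
adjacency matrix, `F = A + (t+1) I` (so `F x y` counts the lines through `x` and `y`) and `J` the
all-ones matrix, `E = v F - (s+1)(t+1) J` satisfies `E² = σ v E` for `σ = s + t + 1 - α`. As `E`
commutes with the permutation matrix `P` of a translation, `tr (E P) / (σ v)` is a sum of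
eigenvalues of `P`, an algebraic integer, and being rational it is an integer. Translating by a
point not collinear with `1` gives `tr (E P) = -v (s+1)(t+1)`, whence `σ ∣ (s+1)(t+1)`.

By rigidity, the translates of a line through `1` that still pass through `1` are exactly `s + 1`
lines, so the pencil at `1` splits into such classes and `s + 1 ∣ t + 1`. The two
divisibilities force `s + 1 ≤ α (α + 1)`.
-/

/-- Encoding of a partial geometry `pg(s,t,α)` whose point set is the abelian group `G`,
admitting `G` (acting by translation) as an abelian Singer group; the lines are the finite
subsets of `G` collected in `𝓛`.  Axioms (i)–(v). -/
structure IsPGSinger (G : Type*) [CommGroup G] [DecidableEq G]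
    (𝓛 : Set (Finset G)) (s t α : ℕ) : Prop where
  /-- (i) every line has exactly `s+1` points -/
  line_card : ∀ L ∈ 𝓛, L.card = s + 1
  /-- (ii) every point lies on exactly `t+1` lines -/
  point_deg : ∀ x : G, {L | L ∈ 𝓛 ∧ x ∈ L}.ncard = t + 1
  /-- (iii) two distinct lines share at most one point -/
  line_inter : ∀ L ∈ 𝓛, ∀ M ∈ 𝓛, L ≠ M → ((L : Set G) ∩ (M : Set G)).ncard ≤ 1
  /-- (iv) for a non-incident point–line pair `(x,L)`, exactly `α` lines through `x` meet `L` -/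
  alpha_ax : ∀ x : G, ∀ L ∈ 𝓛, x ∉ L →
    {M | M ∈ 𝓛 ∧ x ∈ M ∧ ∃ y ∈ L, y ∈ M}.ncard = α
  /-- (v) the line set is closed under translation by elements of `G` -/
  translate : ∀ g : G, ∀ L ∈ 𝓛, L.image (fun y => g * y) ∈ 𝓛

/-- (vi) The pair `(S,G)` is of rigid type: every line has trivial stabilizer in `G`. -/
def RigidType (G : Type*) [CommGroup G] [DecidableEq G] (𝓛 : Set (Finset G)) : Prop :=
  ∀ g : G, ∀ L ∈ 𝓛, L.image (fun y => g * y) = L → g = 1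

open Finset
open scoped Pointwise

namespace Matrix

open Polynomial

theorem of_one_mul_of_one {n R : Type*} [Fintype n] [NonAssocSemiring R] :
    (of 1 : Matrix n n R) * of 1 = (Fintype.card n : R) • of 1 := by
  ext i j
  simp [mul_apply]

variable {n : Type*} [Fintype n] [DecidableEq n]

theorem isIntegral_of_mulVec_eq_smul {B : Matrix n n ℤ} {x : n → ℂ} {μ : ℂ} (hx : x ≠ 0)
    (h : B.map (algebraMap ℤ ℂ) *ᵥ x = μ • x) : IsIntegral ℤ μ := by
  refine ⟨B.charpoly, B.charpoly_monic, ?_⟩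
  rw [eval₂_eq_eval_map, ← charpoly_map, eval_charpoly, ← exists_mulVec_eq_zero_iff]
  exact ⟨x, hx, by rw [sub_mulVec, h]; simp⟩

theorem exists_mulVec_eq_smul_of_mem_roots_charpoly {N : Matrix n n ℂ} {μ : ℂ}
    (hμ : μ ∈ N.charpoly.roots) : ∃ x ≠ 0, N *ᵥ x = μ • x := by
  have hdet : (scalar n μ - N).det = 0 := by
    rw [← eval_charpoly]
    exact isRoot_of_mem_roots hμ
  obtain ⟨x, hx, hNx⟩ := exists_mulVec_eq_zero_iff.mpr hdet
  refine ⟨x, hx, ?_⟩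
  rw [sub_mulVec, sub_eq_zero] at hNx
  simpa using hNx.symm

/-- An eigenvector of `P * B` for a nonzero eigenvalue lies in the range of the idempotent `P`,
where `B` acts by the same eigenvalue. -/
theorem isIntegral_trace_mul_of_isIdempotentElem {P : Matrix n n ℂ} {B : Matrix n n ℤ}
    (hP : IsIdempotentElem P) (hPB : Commute P (B.map (algebraMap ℤ ℂ))) :
    IsIntegral ℤ (P * B.map (algebraMap ℤ ℂ)).trace := by
  rw [trace_eq_sum_roots_charpoly]
  refine IsIntegral.multiset_sum fun μ hμ => ?_
  rcases eq_or_ne μ 0 with rfl | hμ0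
  · exact isIntegral_zero
  obtain ⟨x, hx, hPBx⟩ := exists_mulVec_eq_smul_of_mem_roots_charpoly hμ
  have hPx : P *ᵥ x = x := by
    have h : μ • (P *ᵥ x) = μ • x := by
      rw [← mulVec_smul, ← hPBx, mulVec_mulVec, ← mul_assoc, hP.eq, hPBx]
    exact smul_right_injective _ hμ0 h
  refine isIntegral_of_mulVec_eq_smul (B := B) hx ?_
  calc B.map (algebraMap ℤ ℂ) *ᵥ x = B.map (algebraMap ℤ ℂ) *ᵥ (P *ᵥ x) := by rw [hPx]
    _ = μ • x := by rw [mulVec_mulVec, ← hPB.eq, hPBx]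

theorem dvd_trace_mul_of_mul_self_eq_smul {A B : Matrix n n ℤ} {c : ℤ} (hc : c ≠ 0)
    (hA : A * A = c • A) (hAB : Commute A B) : c ∣ (A * B).trace := by
  set f := (algebraMap ℤ ℂ).mapMatrix (m := n)
  set P : Matrix n n ℂ := (c : ℂ)⁻¹ • f A
  have hc' : (c : ℂ) ≠ 0 := Int.cast_ne_zero.mpr hc
  have hP : IsIdempotentElem P := by
    have : f A * f A = (c : ℂ) • f A := by
      rw [← map_mul, hA, map_zsmul, Int.cast_smul_eq_zsmul]
    simp only [IsIdempotentElem, P, smul_mul_smul_comm, this, smul_smul]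
    field_simp
  have hPB : Commute P (f B) := ((hAB.map f).smul_left _)
  have htr : (P * f B).trace = algebraMap ℚ ℂ (((A * B).trace : ℚ) / c) := by
    rw [smul_mul_assoc, ← map_mul, trace_smul, smul_eq_mul, inv_mul_eq_div,
      RingHom.mapMatrix_apply, ← AddMonoidHom.map_trace]
    simp
  have hint : IsIntegral ℤ (((A * B).trace : ℚ) / c) := by
    rw [← isIntegral_algebraMap_iff (algebraMap ℚ ℂ).injective, ← htr]
    exact isIntegral_trace_mul_of_isIdempotentElem hP hPB
  obtain ⟨y, hy⟩ := IsIntegrallyClosed.isIntegral_iff.mp hint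
  refine ⟨y, ?_⟩
  rw [eq_div_iff (Int.cast_ne_zero.mpr hc), algebraMap_int_eq, eq_intCast] at hy
  exact_mod_cast hy.symm.trans (mul_comm _ _)

theorem commute_permMatrix_mulLeft {G R : Type*} [Group G] [Fintype G] [DecidableEq G]
    [NonAssocSemiring R] {M : Matrix G G R} {g : G} (hM : ∀ a b, M (g * a) (g * b) = M a b) :
    Commute M ((Equiv.mulLeft g).permMatrix R) := by
  rw [Commute, SemiconjBy, PEquiv.mul_toMatrix_toPEquiv, PEquiv.toMatrix_toPEquiv_mul]
  ext a b
  simpa using (hM a (g⁻¹ * b)).symm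

end Matrix

theorem smul_sub_smul_mul_self {R A : Type*} [CommRing R] [Ring A] [Algebra R A] {F J : A}
    {σ μ ρ v : R} (hF : F * F = σ • F + μ • J) (hFJ : F * J = ρ • J) (hJF : J * F = ρ • J)
    (hJ : J * J = v • J) (hv : v * μ = ρ * (ρ - σ)) :
    (v • F - ρ • J) * (v • F - ρ • J) = (σ * v) • (v • F - ρ • J) := by
  simp only [sub_mul, mul_sub, smul_mul_smul_comm, hF, hFJ, hJF, hJ]
  linear_combination (norm := module) v • hv • J

namespace SimpleGraph

open Matrix

variable {V : Type*} [Fintype V] {G : SimpleGraph V} [DecidableRel G.Adj] {R : Type*}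

theorem IsRegularOfDegree.adjMatrix_mul_of_one [NonAssocSemiring R] {d : ℕ}
    (h : G.IsRegularOfDegree d) : G.adjMatrix R * of 1 = (d : R) • of 1 := by
  ext i j
  simp [adjMatrix_mul_apply, h i]

theorem IsRegularOfDegree.of_one_mul_adjMatrix [NonAssocSemiring R] {d : ℕ}
    (h : G.IsRegularOfDegree d) : of 1 * G.adjMatrix R = (d : R) • of 1 := by
  ext i j
  simp [mul_adjMatrix_apply, h j]

/-- `hc` says that `-c` is a root of `x² - (ℓ - μ) x - (k - μ)`, a restricted eigenvalue. -/
theorem IsSRGWith.adjMatrix_add_smul_one_mul_self [DecidableEq V] [CommRing R] {n k ℓ μ : ℕ}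
    (h : G.IsSRGWith n k ℓ μ) {c : R} (hc : (k : R) - μ = c * (ℓ - μ + c)) :
    (G.adjMatrix R + c • 1) * (G.adjMatrix R + c • 1) =
      ((ℓ : R) - μ + 2 * c) • (G.adjMatrix R + c • 1) + (μ : R) • of 1 := by
  classical
  have hsq := h.matrix_eq (α := R)
  have hJ := G.one_add_adjMatrix_add_compl_adjMatrix_eq_of_one (α := R)
  rw [compl_adjMatrix_eq_adjMatrix_compl] at hJ
  rw [sq] at hsq
  simp only [add_mul, mul_add, mul_smul_comm, smul_mul_assoc, one_mul, mul_one]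
  rw [hsq, ← hJ]
  simp only [← Nat.cast_smul_eq_nsmul R]
  linear_combination (norm := module) hc • (1 : Matrix V V R)

end SimpleGraph

/-- With `s = α + δ`, `σ = s + t + 1 - α = t + 1 + δ` and `t + 1 ≡ -δ [MOD σ]`, so `σ` divides
`δ (s + 1)` and `δ²`, hence `δ g` for `g = gcd δ (s + 1) = gcd δ (α + 1)`. Writing `δ g = σ c`
with `0 < c < g` gives `δ (g - c) = (t + 1) c`, so `s + 1 ∣ (α + 1) (g - c)` and `g - c ≤ α`. -/
theorem add_one_le_mul_add_one_of_dvd {s t α : ℕ} (hαs : α < s) (hst : s + 1 ∣ t + 1)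
    (hσ : s + t + 1 - α ∣ (s + 1) * (t + 1)) : s + 1 ≤ α * (α + 1) := by
  obtain ⟨δ, rfl⟩ : ∃ δ, s = α + δ := ⟨s - α, by omega⟩
  rw [show α + δ + t + 1 - α = t + 1 + δ by omega] at hσ
  set σ := t + 1 + δ
  have hσ_sq : σ ∣ (t + 1) * (t + 1) := hσ.trans (mul_dvd_mul_right hst _)
  have hσ_δs : σ ∣ δ * (α + δ + 1) :=
    (Nat.dvd_add_right (mul_comm (α + δ + 1) (t + 1) ▸ hσ)).mp
      (by rw [← add_mul]; exact dvd_mul_right _ _)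
  have hσ_δt : σ ∣ δ * (t + 1) :=
    (Nat.dvd_add_right hσ_sq).mp (by rw [← add_mul]; exact dvd_mul_right _ _)
  have hσ_δδ : σ ∣ δ * δ :=
    (Nat.dvd_add_right (mul_comm δ (t + 1) ▸ hσ_δt)).mp
      (by rw [← add_mul]; exact dvd_mul_right _ _)
  set g := Nat.gcd δ (α + 1)
  have hg : g = Nat.gcd δ (α + δ + 1) := by
    rw [show α + δ + 1 = α + 1 + δ by ring, Nat.gcd_add_self_right]
  obtain ⟨c, hc⟩ : σ ∣ δ * g := by
    rw [hg, ← Nat.gcd_mul_left]; exact Nat.dvd_gcd hσ_δδ hσ_δs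
  have hg_pos : 0 < g := Nat.gcd_pos_of_pos_right _ (Nat.succ_pos α)
  have hg_le : g ≤ α + 1 := Nat.le_of_dvd (Nat.succ_pos α) (Nat.gcd_dvd_right _ _)
  have hc_pos : 0 < c := Nat.pos_of_ne_zero fun h => by
    rw [h, mul_zero] at hc
    exact (Nat.mul_pos (by omega) hg_pos).ne' hc
  have hc_lt : c < g := by
    by_contra! h
    have : δ * g < σ * c := Nat.mul_lt_mul_of_lt_of_le (by omega) h hc_pos
    omega
  have hm : δ * (g - c) = (t + 1) * c := by
    rw [Nat.mul_sub, hc]; simp only [σ]; rw [add_mul, Nat.add_sub_cancel]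
  have hdvd : α + δ + 1 ∣ (α + 1) * (g - c) :=
    (Nat.dvd_add_right (hm ▸ dvd_mul_of_dvd_left hst c)).mp
      (by rw [← add_mul, show δ + (α + 1) = α + δ + 1 by ring]; exact dvd_mul_right _ _)
  calc α + δ + 1 ≤ (α + 1) * (g - c) := Nat.le_of_dvd (Nat.mul_pos α.succ_pos (by omega)) hdvd
    _ ≤ (α + 1) * α := Nat.mul_le_mul_left _ (by omega)
    _ = α * (α + 1) := mul_comm _ _

def collinearityGraph {P : Type*} (𝓛 : Set (Finset P)) : SimpleGraph P where
  Adj x y := x ≠ y ∧ ∃ L ∈ 𝓛, x ∈ L ∧ y ∈ L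
  symm := ⟨fun _ _ ⟨hxy, L, hL, hx, hy⟩ => ⟨hxy.symm, L, hL, hy, hx⟩⟩
  loopless := ⟨fun _ h => h.1 rfl⟩

noncomputable instance {P : Type*} (𝓛 : Set (Finset P)) :
    DecidableRel (collinearityGraph 𝓛).Adj :=
  Classical.decRel _

noncomputable def linesThrough {P : Type*} [Finite P] (𝓛 : Set (Finset P)) (x : P) :
    Finset (Finset P) :=
  (Set.toFinite {L | L ∈ 𝓛 ∧ x ∈ L}).toFinset

theorem mem_linesThrough {P : Type*} [Finite P] {𝓛 : Set (Finset P)} {x : P} {L : Finset P} :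
    L ∈ linesThrough 𝓛 x ↔ L ∈ 𝓛 ∧ x ∈ L :=
  Set.Finite.mem_toFinset _

theorem neighborFinset_collinearityGraph {P : Type*} [Fintype P] [DecidableEq P]
    {𝓛 : Set (Finset P)} (x : P) :
    (collinearityGraph 𝓛).neighborFinset x = (linesThrough 𝓛 x).biUnion (·.erase x) := by
  ext y
  simp only [SimpleGraph.mem_neighborFinset, mem_biUnion, mem_linesThrough, mem_erase]
  exact ⟨fun ⟨hxy, L, hL, hx, hy⟩ => ⟨L, ⟨hL, hx⟩, Ne.symm hxy, hy⟩,
    fun ⟨L, ⟨hL, hx⟩, hyx, hy⟩ => ⟨Ne.symm hyx, L, hL, hx, hy⟩⟩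

/-- `v F - (s+1)(t+1) J`, where `F x y` is the number of lines through `x` and `y` (`t + 1` on
the diagonal), whose row sums are `(s+1)(t+1)`, and `J` is the all-ones matrix. -/
noncomputable def centeredLineCountMatrix {G : Type*} [Fintype G] [DecidableEq G]
    (𝓛 : Set (Finset G)) (s t : ℕ) : Matrix G G ℤ :=
  (Fintype.card G : ℤ) • ((collinearityGraph 𝓛).adjMatrix ℤ + ((t : ℤ) + 1) • 1) -
    (((s : ℤ) + 1) * (t + 1)) • Matrix.of 1

theorem RigidType.eq_one_of_smul_eq {G : Type*} [CommGroup G] [DecidableEq G]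
    {𝓛 : Set (Finset G)} (hrig : RigidType G 𝓛) {g : G} {L : Finset G} (hL : L ∈ 𝓛)
    (h : g • L = L) : g = 1 :=
  hrig g L hL (by rwa [smul_finset_def] at h)

namespace IsPGSinger

variable {G : Type*} [CommGroup G] [DecidableEq G] {𝓛 : Set (Finset G)} {s t α : ℕ}
  (hpg : IsPGSinger G 𝓛 s t α)
include hpg

theorem eq_of_mem_of_mem {L M : Finset G} (hL : L ∈ 𝓛) (hM : M ∈ 𝓛) {x y : G} (hxy : x ≠ y)
    (hxL : x ∈ L) (hyL : y ∈ L) (hxM : x ∈ M) (hyM : y ∈ M) : L = M := by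
  by_contra hLM
  have := hpg.line_inter L hL M hM hLM
  rw [← Finset.coe_inter, Set.ncard_coe_finset, Finset.card_le_one] at this
  exact hxy (this x (mem_inter.mpr ⟨hxL, hxM⟩) y (mem_inter.mpr ⟨hyL, hyM⟩))

theorem smul_mem (g : G) {L : Finset G} (hL : L ∈ 𝓛) : g • L ∈ 𝓛 := by
  rw [smul_finset_def]
  exact hpg.translate g L hL

theorem adj_mul_mul {x y : G} (g : G) (h : (collinearityGraph 𝓛).Adj x y) :
    (collinearityGraph 𝓛).Adj (g * x) (g * y) := by
  obtain ⟨hxy, L, hL, hx, hy⟩ := h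
  exact ⟨mul_left_cancel.mt hxy, g • L, hpg.smul_mem g hL, smul_mem_smul_finset hx,
    smul_mem_smul_finset hy⟩

theorem adj_mul_mul_iff (g x y : G) :
    (collinearityGraph 𝓛).Adj (g * x) (g * y) ↔ (collinearityGraph 𝓛).Adj x y :=
  ⟨fun h => by simpa using hpg.adj_mul_mul g⁻¹ h, hpg.adj_mul_mul g⟩

/-- The points of `L` collinear with `x` correspond to the lines through `x` meeting `L`. -/
theorem card_filter_adj {L : Finset G} (hL : L ∈ 𝓛) {x : G} (hx : x ∉ L) :
    (L.filter ((collinearityGraph 𝓛).Adj x)).card = α := by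
  rw [← hpg.alpha_ax x L hL hx, ← Set.ncard_coe_finset]
  symm
  refine Set.ncard_congr (fun M hM => hM.2.2.choose) ?_ ?_ ?_
  · intro M hM
    obtain ⟨hyL, hyM⟩ := hM.2.2.choose_spec
    exact mem_filter.mpr ⟨hyL, (ne_of_mem_of_not_mem hyL hx).symm, M, hM.1, hM.2.1, hyM⟩
  · intro M M' hM hM' h
    obtain ⟨hyL, hyM⟩ := hM.2.2.choose_spec
    obtain ⟨-, hyM'⟩ := hM'.2.2.choose_spec
    exact hpg.eq_of_mem_of_mem hM.1 hM'.1 (ne_of_mem_of_not_mem hyL hx).symm hM.2.1 hyM hM'.2.1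
      (h ▸ hyM')
  · intro y hy
    obtain ⟨hyL, -, M, hM, hxM, hyM⟩ := mem_filter.mp hy
    have hM' : M ∈ {M | M ∈ 𝓛 ∧ x ∈ M ∧ ∃ y ∈ L, y ∈ M} := ⟨hM, hxM, y, hyL, hyM⟩
    refine ⟨M, hM', ?_⟩
    obtain ⟨hzL, hzM⟩ := hM'.2.2.choose_spec
    by_contra hzy
    exact hx (hpg.eq_of_mem_of_mem hL hM hzy hzL hyL hzM hyM ▸ hxM)

variable [Fintype G]

theorem card_linesThrough (x : G) : (linesThrough 𝓛 x).card = t + 1 := by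
  rw [← hpg.point_deg x, Set.ncard_eq_toFinset_card _ (Set.toFinite _)]
  rfl

theorem pairwiseDisjoint_erase (x : G) :
    (linesThrough 𝓛 x : Set (Finset G)).PairwiseDisjoint (·.erase x) := by
  intro L hL M hM hLM
  rw [Finset.mem_coe, mem_linesThrough] at hL hM
  refine Finset.disjoint_left.mpr fun y hyL hyM => hLM ?_
  rw [mem_erase] at hyL hyM
  exact hpg.eq_of_mem_of_mem hL.1 hM.1 hyL.1 hyL.2 hL.2 hyM.2 hM.2

theorem degree_collinearityGraph (x : G) : (collinearityGraph 𝓛).degree x = (t + 1) * s := by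
  rw [← SimpleGraph.card_neighborFinset_eq_degree, neighborFinset_collinearityGraph,
    card_biUnion (hpg.pairwiseDisjoint_erase x), ← hpg.card_linesThrough x, ← smul_eq_mul,
    ← sum_const]
  refine sum_congr rfl fun L hL => ?_
  rw [mem_linesThrough] at hL
  rw [card_erase_of_mem hL.2, hpg.line_card L hL.1, Nat.add_sub_cancel]

theorem card_commonNeighbors_collinearityGraph (x y : G) :
    Fintype.card ((collinearityGraph 𝓛).commonNeighbors x y) =
      ∑ L ∈ linesThrough 𝓛 x, ((L.erase x).filter ((collinearityGraph 𝓛).Adj y)).card := by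
  rw [← card_biUnion, ← filter_biUnion, ← neighborFinset_collinearityGraph, ← Set.toFinset_card]
  · congr 1
    refine Finset.ext fun z => ?_
    rw [Set.mem_toFinset]
    simp only [SimpleGraph.commonNeighbors, Set.mem_inter_iff,
      SimpleGraph.mem_neighborSet, mem_filter, SimpleGraph.mem_neighborFinset,
      SimpleGraph.adj_comm _ y]
  · exact (hpg.pairwiseDisjoint_erase x).mono fun L => filter_subset _ _

theorem card_commonNeighbors_of_not_adj {x y : G} (hxy : x ≠ y)
    (hnadj : ¬(collinearityGraph 𝓛).Adj x y) :
    Fintype.card ((collinearityGraph 𝓛).commonNeighbors x y) = α * (t + 1) := by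
  rw [hpg.card_commonNeighbors_collinearityGraph, ← hpg.card_linesThrough x, mul_comm,
    ← smul_eq_mul, ← sum_const]
  refine sum_congr rfl fun L hL => ?_
  rw [mem_linesThrough] at hL
  have hyL : y ∉ L := fun hyL => hnadj ⟨hxy, L, hL.1, hL.2, hyL⟩
  rw [filter_erase, erase_eq_of_notMem fun h => hnadj (mem_filter.mp h).2.symm,
    hpg.card_filter_adj hL.1 hyL]

theorem card_commonNeighbors_of_adj {x y : G} (hadj : (collinearityGraph 𝓛).Adj x y) :
    Fintype.card ((collinearityGraph 𝓛).commonNeighbors x y) = s - 1 + t * (α - 1) := by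
  obtain ⟨hxy, L₀, hL₀, hxL₀, hyL₀⟩ := id hadj
  have hL₀x : L₀ ∈ linesThrough 𝓛 x := mem_linesThrough.mpr ⟨hL₀, hxL₀⟩
  rw [hpg.card_commonNeighbors_collinearityGraph, ← sum_erase_add _ _ hL₀x, add_comm]
  congr 1
  · have : (L₀.erase x).filter ((collinearityGraph 𝓛).Adj y) = (L₀.erase x).erase y := by
      ext z
      simp only [mem_filter, mem_erase]
      exact ⟨fun ⟨hz, hyz⟩ => ⟨hyz.1.symm, hz⟩,
        fun ⟨hzy, hz⟩ => ⟨hz, hzy.symm, L₀, hL₀, hyL₀, hz.2⟩⟩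
    rw [this, card_erase_of_mem (mem_erase.mpr ⟨hxy.symm, hyL₀⟩), card_erase_of_mem hxL₀,
      hpg.line_card L₀ hL₀]
    rfl
  · rw [← Nat.add_sub_cancel t 1, ← hpg.card_linesThrough x, ← card_erase_of_mem hL₀x,
      ← smul_eq_mul, ← sum_const]
    refine sum_congr rfl fun L hL => ?_
    obtain ⟨hLL₀, hL⟩ := mem_erase.mp hL
    rw [mem_linesThrough] at hL
    have hyL : y ∉ L := fun hyL => hLL₀ (hpg.eq_of_mem_of_mem hL.1 hL₀ hxy hL.2 hyL hxL₀ hyL₀)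
    rw [filter_erase, card_erase_of_mem (mem_filter.mpr ⟨hL.2, hadj.symm⟩),
      hpg.card_filter_adj hL.1 hyL]

theorem isSRGWith_collinearityGraph :
    (collinearityGraph 𝓛).IsSRGWith (Fintype.card G) ((t + 1) * s) (s - 1 + t * (α - 1))
      (α * (t + 1)) where
  card := rfl
  regular := hpg.degree_collinearityGraph
  of_adj _ _ := hpg.card_commonNeighbors_of_adj
  of_not_adj _ _ := hpg.card_commonNeighbors_of_not_adj

/-- The parameter relation `k (k - λ - 1) = (v - k - 1) μ` of the collinearity graph, solved
for `v`. -/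
theorem card_mul_eq (hα : 0 < α) (hαs : α ≤ s) :
    (Fintype.card G : ℤ) * α = (s + 1) * (s * t + α) := by
  have h := hpg.isSRGWith_collinearityGraph.param_eq _ Fintype.card_pos
  have hk := (collinearityGraph 𝓛).degree_lt_card_verts 1
  rw [hpg.degree_collinearityGraph, Nat.lt_iff_add_one_le] at hk
  have hℓ : s - 1 + t * (α - 1) + 1 ≤ (t + 1) * s := by
    have := Nat.mul_le_mul_left t (show α - 1 ≤ s by omega)
    rw [add_mul, one_mul]
    omega
  rw [Nat.sub_sub, Nat.sub_sub] at h
  zify [hℓ, hk, hα, show 1 ≤ s by omega] at h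
  have ht : ((t : ℤ) + 1) ≠ 0 := by positivity
  refine mul_left_cancel₀ ht ?_
  linear_combination -h

theorem exists_not_adj_one (hα : 0 < α) (hαs : α ≤ s) (ht : 0 < t) :
    ∃ g : G, g ≠ 1 ∧ ¬(collinearityGraph 𝓛).Adj 1 g := by
  have hcard : (collinearityGraph 𝓛).degree 1 + 1 < Fintype.card G := by
    have hv := hpg.card_mul_eq hα hαs
    rw [hpg.degree_collinearityGraph]
    zify at hα hαs ht ⊢
    have hs : (0 : ℤ) < s := hα.trans_le hαs
    nlinarith [mul_pos (mul_pos hs ht) (show (0 : ℤ) < s + 1 - α by linarith)]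
  have : (insert 1 ((collinearityGraph 𝓛).neighborFinset 1)).card < (univ : Finset G).card := by
    rw [card_univ]
    exact (card_insert_le _ _).trans_lt (by rwa [SimpleGraph.card_neighborFinset_eq_degree])
  obtain ⟨g, -, hg⟩ := exists_mem_notMem_of_card_lt_card this
  simp only [mem_insert, SimpleGraph.mem_neighborFinset, not_or] at hg
  exact ⟨g, hg.1, hg.2⟩

/-- By rigidity, the lines through `1` in the orbit of `L` are the `s + 1` translates `y⁻¹ • L`,
`y ∈ L`. -/
theorem card_filter_orbit_eq (hrig : RigidType G 𝓛) {L : Finset G}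
    (hL : L ∈ linesThrough 𝓛 1) :
    {M ∈ linesThrough 𝓛 1 | MulAction.orbit G M = MulAction.orbit G L}.card = s + 1 := by
  rw [mem_linesThrough] at hL
  have : {M ∈ linesThrough 𝓛 1 | MulAction.orbit G M = MulAction.orbit G L} =
      L.image fun y => y⁻¹ • L := by
    ext M
    simp only [mem_filter, mem_linesThrough, mem_image, MulAction.orbit_eq_iff]
    constructor
    · rintro ⟨⟨-, h1M⟩, g, rfl⟩
      obtain ⟨y, hy, hgy⟩ := mem_smul_finset.mp h1M
      exact ⟨y, hy, by rw [eq_inv_of_mul_eq_one_left hgy]⟩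
    · rintro ⟨y, hy, rfl⟩
      refine ⟨⟨hpg.smul_mem _ hL.1, ?_⟩, MulAction.mem_orbit _ _⟩
      simpa using smul_mem_smul_finset (a := y⁻¹) hy
  rw [this, card_image_of_injOn, hpg.line_card L hL.1]
  intro y _ z _ hyz
  have := hrig.eq_one_of_smul_eq hL.1 (show (z * y⁻¹) • L = L by
    rw [mul_smul, show y⁻¹ • L = z⁻¹ • L from hyz, smul_inv_smul])
  simpa [mul_inv_eq_one, eq_comm] using this

theorem add_one_dvd_add_one (hrig : RigidType G 𝓛) : s + 1 ∣ t + 1 := by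
  classical
  rw [← hpg.card_linesThrough 1, card_eq_sum_card_fiberwise (f := MulAction.orbit G)
    (t := (linesThrough 𝓛 1).image (MulAction.orbit G)) fun L hL => mem_image_of_mem _ hL]
  refine dvd_sum fun O hO => ?_
  obtain ⟨L, hL, rfl⟩ := mem_image.mp hO
  exact (hpg.card_filter_orbit_eq hrig hL).symm.dvd

theorem centeredLineCountMatrix_mul_self (hα : 0 < α) (hαs : α ≤ s) :
    centeredLineCountMatrix 𝓛 s t * centeredLineCountMatrix 𝓛 s t =
      (((s : ℤ) + t + 1 - α) * Fintype.card G) • centeredLineCountMatrix 𝓛 s t := by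
  have hsrg := hpg.isSRGWith_collinearityGraph
  have hF := hsrg.adjMatrix_add_smul_one_mul_self (R := ℤ) (c := (t : ℤ) + 1) (by
    push_cast [Nat.cast_sub (show 1 ≤ s by omega), Nat.cast_sub hα]
    ring)
  have hσ : ((s - 1 + t * (α - 1) : ℕ) : ℤ) - (α * (t + 1) : ℕ) + 2 * ((t : ℤ) + 1) =
      s + t + 1 - α := by
    push_cast [Nat.cast_sub (show 1 ≤ s by omega), Nat.cast_sub hα]
    ring
  rw [hσ] at hF
  have hFJ : ((collinearityGraph 𝓛).adjMatrix ℤ + ((t : ℤ) + 1) • 1) * Matrix.of 1 =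
      (((s : ℤ) + 1) * (t + 1)) • Matrix.of 1 := by
    rw [add_mul, hsrg.regular.adjMatrix_mul_of_one, smul_one_mul]
    push_cast
    module
  have hJF : Matrix.of 1 * ((collinearityGraph 𝓛).adjMatrix ℤ + ((t : ℤ) + 1) • 1) =
      (((s : ℤ) + 1) * (t + 1)) • Matrix.of 1 := by
    rw [mul_add, hsrg.regular.of_one_mul_adjMatrix, mul_smul_one]
    push_cast
    module
  refine smul_sub_smul_mul_self hF hFJ hJF Matrix.of_one_mul_of_one ?_
  push_cast
  linear_combination ((t : ℤ) + 1) * hpg.card_mul_eq hα hαs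

theorem commute_centeredLineCountMatrix_permMatrix (g : G) :
    Commute (centeredLineCountMatrix 𝓛 s t) ((Equiv.mulLeft g).permMatrix ℤ) :=
  Matrix.commute_permMatrix_mulLeft fun a b => by
    simp only [centeredLineCountMatrix, Matrix.sub_apply, Matrix.smul_apply, Matrix.add_apply,
      SimpleGraph.adjMatrix_apply, Matrix.one_apply, Matrix.of_apply, hpg.adj_mul_mul_iff,
      Pi.one_apply, mul_right_inj]

theorem trace_centeredLineCountMatrix_mul_permMatrix {g : G} (hg1 : g ≠ 1)
    (hnadj : ¬(collinearityGraph 𝓛).Adj 1 g) :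
    (centeredLineCountMatrix 𝓛 s t * (Equiv.mulLeft g).permMatrix ℤ).trace =
      -(Fintype.card G * (((s : ℤ) + 1) * (t + 1))) := by
  have hne (a : G) : a ≠ g⁻¹ * a := by simpa [eq_comm] using hg1
  have hadj (a : G) : ¬(collinearityGraph 𝓛).Adj a (g⁻¹ * a) := fun h => hnadj <| by
    convert ((hpg.adj_mul_mul_iff (g * a⁻¹) a (g⁻¹ * a)).mpr h).symm using 1 <;>
      simp [mul_assoc, mul_comm, mul_left_comm]
  rw [PEquiv.mul_toMatrix_toPEquiv]
  simp only [Matrix.trace, Matrix.diag, Matrix.submatrix_apply, id, centeredLineCountMatrix,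
    Matrix.sub_apply, Matrix.smul_apply, Matrix.add_apply, SimpleGraph.adjMatrix_apply,
    Matrix.one_apply, Matrix.of_apply]
  simp [hne, hadj]

theorem sub_dvd_mul (hα : 0 < α) (hαs : α ≤ s) (ht : 0 < t) :
    s + t + 1 - α ∣ (s + 1) * (t + 1) := by
  obtain ⟨g, hg1, hnadj⟩ := hpg.exists_not_adj_one hα hαs ht
  have hv : (Fintype.card G : ℤ) ≠ 0 := Nat.cast_ne_zero.mpr Fintype.card_ne_zero
  have hσ : ((s : ℤ) + t + 1 - α) ≠ 0 := by omega
  have := Matrix.dvd_trace_mul_of_mul_self_eq_smul (mul_ne_zero hσ hv)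
    (hpg.centeredLineCountMatrix_mul_self hα hαs)
    (hpg.commute_centeredLineCountMatrix_permMatrix g)
  rw [hpg.trace_centeredLineCountMatrix_mul_permMatrix hg1 hnadj, dvd_neg,
    mul_comm (Fintype.card G : ℤ), mul_dvd_mul_iff_right hv] at this
  zify [show α ≤ s + t + 1 by omega]
  exact_mod_cast this

end IsPGSinger

/-- for a proper `pg(s,t,α)` of rigid type with abelian Singer group `G`,
`s < (α+1)² - 1`. -/
theorem rigid_type_s_bound
    (G : Type*) [CommGroup G] [Fintype G] [DecidableEq G]
    (s t α : ℕ) (hα2 : 2 ≤ α) (hαs : α < s) (hαt : α < t)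
    (𝓛 : Set (Finset G)) (hpg : IsPGSinger G 𝓛 s t α) (hrig : RigidType G 𝓛) :
    s < (α + 1) ^ 2 - 1 := by
  have hσ := hpg.sub_dvd_mul (by omega) hαs.le (by omega)
  have hs := add_one_le_mul_add_one_of_dvd hαs (hpg.add_one_dvd_add_one hrig) hσ
  have : α * (α + 1) < (α + 1) ^ 2 := by nlinarith
  omega
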